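/- arXiv:1003.5087 — 2 statements merged into one kernel-verified Lean document; each statement's English description precedes it below -/
import Mathlib

section
/- A generic compact metric space contains no three pairwise distinct collinear points; that is, the set of compact metric spaces X such that d(x,y) = d(x,z) + d(z,y) implies z ∈ {x,y} is residual in the Gromov-Hausdorff space. -/
/-!
Fix a scale `q > 0` and call a compact space `q`-strict if no triple `x, z, y` with
`d(x, z), d(z, y) ≥ q` is collinear. The interior of the set of `q`-strict spaces is dense: a
compact space is approximated by a finite `ε`-net whose nonzero distances are all increased by a
constant `c > 0`, and in such a space `d(x, z) + d(z, y) - d(x, y) ≥ c` whenever `z ∉ {x, y}`.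
This quantitative gap survives a Gromov-Hausdorff perturbation of size `η = min (q / 2) (c / 6)`,
since an approximating map moves each of the three distances by less than `2η`; so a whole
ball around the perturbed net consists of `q`-strict spaces. Intersecting over `q = 1 / (n + 1)`
gives a residual set of spaces without nondegenerate collinear triples.
-/

open GromovHausdorff Metric Set
open scoped NNReal

/-- `X` with every distance between distinct points increased by `c`. -/
def DistShift (X : Type*) (_c : ℝ≥0) : Type _ := X

namespace DistShift

variable {X : Type*} {c : ℝ≥0}

def toShift (c : ℝ≥0) : X ≃ DistShift X c := Equiv.refl X

instance [h : Nonempty X] : Nonempty (DistShift X c) := h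

instance [h : Finite X] : Finite (DistShift X c) := h

variable [MetricSpace X]

open Classical in
noncomputable instance : MetricSpace (DistShift X c) where
  dist x y := if x = y then 0 else dist ((toShift c).symm x) ((toShift c).symm y) + c
  dist_self x := if_pos rfl
  dist_comm x y := by
    by_cases h : x = y
    · simp only [h]
    · simp only [h, Ne.symm h, if_false, dist_comm]
  dist_triangle x y z := by
    have := dist_triangle ((toShift c).symm x) ((toShift c).symm y) ((toShift c).symm z)
    have := c.2
    split_ifs <;> subst_vars <;> simp_all <;> linarith
  eq_of_dist_eq_zero {x y} h := by
    by_contra hne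
    simp only [hne, if_false] at h
    have := dist_nonneg (x := (toShift c).symm x) (y := (toShift c).symm y)
    exact hne ((toShift c).symm.injective (dist_eq_zero.1 (by linarith [c.2])))

instance [Finite X] : CompactSpace (DistShift X c) := Finite.compactSpace

theorem dist_toShift_of_ne {x y : X} (h : x ≠ y) :
    dist (toShift c x) (toShift c y) = dist x y + c :=
  if_neg h

theorem dist_add_le_of_ne {x y z : DistShift X c} (hzx : z ≠ x) (hzy : z ≠ y) :
    dist x y + c ≤ dist x z + dist z y := by
  obtain ⟨x, rfl⟩ := (toShift c).surjective x
  obtain ⟨y, rfl⟩ := (toShift c).surjective y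
  obtain ⟨z, rfl⟩ := (toShift c).surjective z
  rw [dist_toShift_of_ne (fun h => hzx (congrArg _ h).symm),
    dist_toShift_of_ne (fun h => hzy (congrArg _ h))]
  by_cases hxy : x = y
  · subst hxy
    simp only [dist_self, zero_add]
    linarith [dist_nonneg (x := x) (y := z), dist_nonneg (x := z) (y := x), c.2]
  · rw [dist_toShift_of_ne hxy]
    linarith [dist_triangle x z y, c.2]

end DistShift

open DistShift

theorem ghDist_distShift_le {X : Type*} [MetricSpace X] [CompactSpace X] [Nonempty X]
    {s : Set X} [Finite s] [Nonempty s] {ε : ℝ} (hs : ∀ x : X, ∃ y ∈ s, dist x y ≤ ε)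
    (c : ℝ≥0) : ghDist X (DistShift s c) ≤ ε + c / 2 := by
  have H : ∀ x y : s, |dist x y - dist (toShift c x) (toShift c y)| ≤ c := by
    intro x y
    by_cases hxy : x = y
    · simp [hxy]
    · rw [dist_toShift_of_ne hxy, sub_add_cancel_left, abs_neg, NNReal.abs_eq]
  simpa using ghDist_le_of_approx_subsets (ε₃ := 0) (toShift c) hs
    (fun w => ⟨(toShift c).symm w, by simp⟩) H

theorem exists_abs_dist_sub_lt_of_ghDist_lt {X Y : Type*} [MetricSpace X] [CompactSpace X]
    [Nonempty X] [MetricSpace Y] [CompactSpace Y] [Nonempty Y] {η : ℝ} (h : ghDist X Y < η) :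
    ∃ f : Y → X, ∀ a b : Y, |dist (f a) (f b) - dist a b| < 2 * η := by
  obtain ⟨Φ, Ψ, hΦ, hΨ, hd⟩ := ghDist_eq_hausdorffDist X Y
  have hfin : hausdorffEDist (range Φ) (range Ψ) ≠ ⊤ :=
    hausdorffEDist_ne_top_of_nonempty_of_bounded (range_nonempty _) (range_nonempty _)
      (isCompact_range hΦ.continuous).isBounded (isCompact_range hΨ.continuous).isBounded
  have hnear : ∀ w : Y, ∃ v : X, dist (Φ v) (Ψ w) < η := by
    intro w
    obtain ⟨_, ⟨v, rfl⟩, hv⟩ :=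
      exists_dist_lt_of_hausdorffDist_lt' (mem_range_self w) (hd ▸ h) hfin
    exact ⟨v, hv⟩
  choose f hf using hnear
  refine ⟨f, fun a b => ?_⟩
  rw [← hΦ.dist_eq, ← hΨ.dist_eq, ← Real.dist_eq]
  linarith [dist_dist_dist_le (Φ (f a)) (Φ (f b)) (Ψ a) (Ψ b), hf a, hf b]

theorem dist_lt_dist_add_dist_of_ghDist_lt {X Y : Type*} [MetricSpace X] [CompactSpace X]
    [Nonempty X] [MetricSpace Y] [CompactSpace Y] [Nonempty Y] {q r : ℝ}
    (hX : ∀ x y z : X, z ≠ x → z ≠ y → dist x y + r ≤ dist x z + dist z y)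
    (hXY : ghDist X Y < min (q / 2) (r / 6)) {x y z : Y} (hxz : q ≤ dist x z)
    (hzy : q ≤ dist z y) : dist x y < dist x z + dist z y := by
  obtain ⟨f, hf⟩ := exists_abs_dist_sub_lt_of_ghDist_lt hXY
  have hηq := min_le_left (q / 2) (r / 6)
  have hηr := min_le_right (q / 2) (r / 6)
  obtain ⟨hxz_lower, hxz_upper⟩ := abs_lt.1 (hf x z)
  obtain ⟨hzy_lower, hzy_upper⟩ := abs_lt.1 (hf z y)
  obtain ⟨hxy_lower, -⟩ := abs_lt.1 (hf x y)
  have hzx' : f z ≠ f x := fun h => by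
    rw [h, dist_self] at hxz_lower
    linarith
  have hzy' : f z ≠ f y := fun h => by
    rw [h, dist_self] at hzy_lower
    linarith
  linarith [hX (f x) (f y) (f z) hzx' hzy']

def strictTriangleSet (q : ℝ) : Set GHSpace :=
  {p | ∀ x y z : p.Rep, q ≤ dist x z → q ≤ dist z y → dist x y < dist x z + dist z y}

theorem toGHSpace_distShift_mem_interior {X : Type*} [MetricSpace X] [Finite X] [Nonempty X]
    {c : ℝ≥0} (hc : 0 < c) {q : ℝ} (hq : 0 < q) :
    toGHSpace (DistShift X c) ∈ interior (strictTriangleSet q) := by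
  refine mem_interior_iff_mem_nhds.2 (Metric.mem_nhds_iff.2
    ⟨min (q / 2) (c / 6), by positivity, fun p hp x y z hxz hzy => ?_⟩)
  have hgh : ghDist (DistShift X c) p.Rep < min (q / 2) (c / 6) := by
    rwa [ghDist, p.toGHSpace_rep, dist_comm]
  exact dist_lt_dist_add_dist_of_ghDist_lt (fun _ _ _ => dist_add_le_of_ne) hgh hxz hzy

theorem dense_interior_strictTriangleSet {q : ℝ} (hq : 0 < q) :
    Dense (interior (strictTriangleSet q)) := by
  refine Metric.dense_iff.2 fun p ε hε => ?_
  obtain ⟨s, -, hsf, hcov⟩ := finite_cover_balls_of_compact (isCompact_univ (X := p.Rep))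
    (half_pos hε)
  have hcov' : ∀ x : p.Rep, ∃ y ∈ s, dist x y ≤ ε / 2 := fun x => by
    obtain ⟨y, hy, hxy⟩ := mem_iUnion₂.1 (hcov (mem_univ x))
    exact ⟨y, hy, (mem_ball.1 hxy).le⟩
  have : Finite s := hsf.to_subtype
  have : Nonempty s := by
    obtain ⟨y, hy, -⟩ := hcov' (Classical.arbitrary p.Rep)
    exact ⟨⟨y, hy⟩⟩
  set c := (ε / 2).toNNReal
  have hc : (c : ℝ) = ε / 2 := Real.coe_toNNReal _ (half_pos hε).le
  refine ⟨toGHSpace (DistShift s c), mem_ball.2 ?_,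
    toGHSpace_distShift_mem_interior (by simpa [c] using hε) hq⟩
  have hgh := ghDist_distShift_le hcov' c
  rw [ghDist, p.toGHSpace_rep, dist_comm] at hgh
  linarith

/-- In a generic compact metric space, three pairwise distinct points are never collinear. -/
theorem residual_noCollinear :
    {p : GHSpace | ∀ x y z : p.Rep, dist x y = dist x z + dist z y → z = x ∨ z = y} ∈
      residual GHSpace := by
  have hres : (⋂ n : ℕ, interior (strictTriangleSet (1 / ((n : ℝ) + 1)))) ∈ residual GHSpace :=
    countable_iInter_mem.2 fun n =>
      residual_of_dense_open isOpen_interior (dense_interior_strictTriangleSet (by positivity))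
  refine Filter.mem_of_superset hres fun p hp x y z hcol => ?_
  by_contra! hne
  obtain ⟨n, hn⟩ := exists_nat_one_div_lt (lt_min (dist_pos.2 hne.1.symm) (dist_pos.2 hne.2))
  have hstrict := interior_subset (mem_iInter.1 hp n) x y z
    (hn.le.trans (min_le_left _ _)) (hn.le.trans (min_le_right _ _))
  exact hstrict.ne hcol
end

section
/- A generic compact metric space is homeomorphic to the Cantor set; that is, the set of compact metric spaces homeomorphic to the Cantor set is residual in the Gromov-Hausdorff space. -/
/-!
Brouwer's characterization: fix a sequence `B` of clopen sets separating points and grow a binary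
tree of nonempty clopen sets, cutting the piece at depth `n` by `B n` whenever this is a proper
cut and by any proper clopen cut otherwise (one exists because the space is perfect). Following
the tree sends each point to an address in `ℕ → Bool`; this is a continuous bijection from a
compact space, hence a homeomorphism.

Genericity: for `ε > 0`, the spaces whose `δ`-chain components have diameter `< ε` for some
`δ > 0` form an open dense subset of the Gromov–Hausdorff space (finite spaces belong to it), and
so do the spaces in which every point has a companion at distance in `(a, b)`, `0 < a < b < ε`
(the doubled space `X × {0, w}` belongs to it and is `w`-close to `X`). Openness holds because
spaces at distance `< r` admit a correspondence distorting distances by less than `2r`. A space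
lying in all of these sets is totally disconnected and perfect.
-/

open Set Function Metric TopologicalSpace PiNat GromovHausdorff

section Clopen

variable {X : Type*} [TopologicalSpace X]

def Splits (W K : Set X) : Prop :=
  IsClopen W ∧ (K ∩ W).Nonempty ∧ (K \ W).Nonempty

lemma exists_splits [PerfectSpace X] [TotallySeparatedSpace X] {K : Set X} (hK : IsOpen K)
    (hne : K.Nonempty) : ∃ W, Splits W K := by
  obtain ⟨x, hx⟩ := hne
  obtain ⟨y, ⟨hyK, -⟩, hyx⟩ :=
    accPt_iff_nhds.1 (PerfectSpace.univ_preperfect x (mem_univ x)) K (hK.mem_nhds hx)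
  obtain ⟨W, hW, hxW, hyW⟩ := exists_isClopen_of_totally_separated hyx.symm
  exact ⟨W, hW, ⟨x, hx, hxW⟩, ⟨y, hyK, hyW⟩⟩

lemma exists_seq_isClopen_separating [CompactSpace X] [T2Space X] [TotallyDisconnectedSpace X]
    [SecondCountableTopology X] :
    ∃ B : ℕ → Set X, (∀ n, IsClopen (B n)) ∧ ∀ x y, x ≠ y → ∃ n, x ∈ B n ∧ y ∉ B n := by
  obtain ⟨s, hs, hsc, hbasis⟩ := isTopologicalBasis_isClopen.exists_countable (α := X)
  obtain ⟨B, hB⟩ := (hsc.insert ∅).exists_eq_range (insert_nonempty ∅ s)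
  refine ⟨B, fun n => ?_, fun x y hxy => ?_⟩
  · rcases (hB ▸ mem_range_self n : B n ∈ insert ∅ s) with h | h
    · exact h ▸ isClopen_empty
    · exact hs h
  · obtain ⟨V, hVs, hxV, hVy⟩ := hbasis.exists_subset_of_mem_open hxy isOpen_compl_singleton
    obtain ⟨n, rfl⟩ : V ∈ range B := hB ▸ mem_insert_of_mem ∅ hVs
    exact ⟨n, hxV, fun hy => hVy hy rfl⟩

end Clopen

namespace Brouwer

variable {X : Type*} [TopologicalSpace X] (B : ℕ → Set X)

open Classical in
/-- Cutting by `B n` whenever it splits `K` is what separates any two points at some depth. -/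
noncomputable def splitter (K : Set X) (n : ℕ) : Set X :=
  if Splits (B n) K then B n else Classical.epsilon (Splits · K)

/-- The piece at a node; as in `PiNat.res`, the most recent choice is the head of the list. -/
noncomputable def scheme : List Bool → Set X
  | [] => univ
  | b :: l => scheme l ∩ (splitter B (scheme l) l.length).boolIndicator ⁻¹' {b}

noncomputable def cut (l : List Bool) : Set X :=
  splitter B (scheme B l) l.length

lemma mem_scheme_cons {x : X} {b : Bool} {l : List Bool} :
    x ∈ scheme B (b :: l) ↔ x ∈ scheme B l ∧ (cut B l).boolIndicator x = b :=
  Iff.rfl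

noncomputable def branch (x : X) : ℕ → List Bool
  | 0 => []
  | n + 1 => (cut B (branch x n)).boolIndicator x :: branch x n

noncomputable def toCantor (x : X) (n : ℕ) : Bool :=
  (cut B (branch B x n)).boolIndicator x

@[simp]
lemma length_branch (x : X) (n : ℕ) : (branch B x n).length = n := by
  induction n with
  | zero => rfl
  | succ n ih => simp [branch, ih]

lemma res_toCantor (x : X) (n : ℕ) : res (toCantor B x) n = branch B x n := by
  induction n with
  | zero => rfl
  | succ n ih => rw [res_succ, ih]; rfl

lemma mem_scheme_branch (x : X) : ∀ n, x ∈ scheme B (branch B x n)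
  | 0 => mem_univ x
  | n + 1 => ⟨mem_scheme_branch x n, rfl⟩

lemma branch_eq_of_mem_scheme {x : X} :
    ∀ {l : List Bool}, x ∈ scheme B l → branch B x l.length = l
  | [], _ => rfl
  | b :: l, hx => by
    obtain ⟨hxl, hb⟩ := (mem_scheme_cons B).1 hx
    simp only [List.length_cons, branch, branch_eq_of_mem_scheme hxl, hb]

lemma branch_eq_iff_mem_scheme {x : X} {l : List Bool} :
    branch B x l.length = l ↔ x ∈ scheme B l :=
  ⟨fun h => h ▸ mem_scheme_branch B x l.length, branch_eq_of_mem_scheme B⟩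

lemma toCantor_injective (hB : ∀ n, IsClopen (B n))
    (hsep : ∀ x y, x ≠ y → ∃ n, x ∈ B n ∧ y ∉ B n) : Injective (toCantor B) := by
  intro x y hxy
  by_contra hne
  obtain ⟨n, hx, hy⟩ := hsep x y hne
  have hbranch : branch B x n = branch B y n := by rw [← res_toCantor, ← res_toCantor, hxy]
  have hsplits : Splits (B n) (scheme B (branch B x n)) :=
    ⟨hB n, ⟨x, mem_scheme_branch B x n, hx⟩, ⟨y, hbranch ▸ mem_scheme_branch B y n, hy⟩⟩
  have hcut : cut B (branch B x n) = B n := by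
    rw [cut, splitter, length_branch, if_pos hsplits]
  simpa [toCantor, ← hbranch, hcut, Set.boolIndicator, hx, hy] using congr_fun hxy n

lemma splits_splitter [PerfectSpace X] [TotallySeparatedSpace X] {K : Set X} (hK : IsOpen K)
    (hne : K.Nonempty) (n : ℕ) : Splits (splitter B K n) K := by
  unfold splitter
  split_ifs with h
  · exact h
  · exact Classical.epsilon_spec (exists_splits hK hne)

variable [PerfectSpace X] [TotallySeparatedSpace X] [Nonempty X]

lemma isClopen_scheme_and_nonempty : ∀ l, IsClopen (scheme B l) ∧ (scheme B l).Nonempty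
  | [] => ⟨isClopen_univ, univ_nonempty⟩
  | b :: l => by
    obtain ⟨hcl, hne⟩ := isClopen_scheme_and_nonempty l
    obtain ⟨hW, hin, hout⟩ := splits_splitter B hcl.isOpen hne l.length
    refine ⟨hcl.inter ((isClopen_discrete {b}).preimage
      ((continuous_boolIndicator_iff_isClopen _).2 hW)), ?_⟩
    cases b
    · simpa [scheme, preimage_boolIndicator_false, sdiff_eq] using hout
    · simpa [scheme, preimage_boolIndicator_true] using hin

lemma isClopen_scheme (l : List Bool) : IsClopen (scheme B l) :=
  (isClopen_scheme_and_nonempty B l).1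

lemma scheme_nonempty (l : List Bool) : (scheme B l).Nonempty :=
  (isClopen_scheme_and_nonempty B l).2

lemma continuous_branch (n : ℕ) : Continuous (branch B · n) := by
  refine continuous_discrete_rng.2 fun l => ?_
  obtain rfl | hl := eq_or_ne l.length n
  · simpa only [preimage, mem_singleton_iff, branch_eq_iff_mem_scheme, ofPred_mem_eq] using
      (isClopen_scheme B l).isOpen
  · convert isOpen_empty
    refine eq_empty_of_forall_notMem fun x hx => hl ?_
    rw [← (mem_singleton_iff.1 hx : branch B x n = l), length_branch]

lemma continuous_toCantor : Continuous (toCantor B) :=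
  continuous_pi fun n => (continuous_of_discreteTopology (f := List.headI)).comp
    (continuous_branch B (n + 1))

lemma toCantor_surjective [CompactSpace X] : Surjective (toCantor B) := by
  intro σ
  obtain ⟨x, hx⟩ := IsCompact.nonempty_iInter_of_sequence_nonempty_isCompact_isClosed
    (fun n => scheme B (res σ n)) (fun n => inter_subset_left) (fun n => scheme_nonempty B _)
    isCompact_univ (fun n => (isClopen_scheme B _).isClosed)
  refine ⟨x, res_injective (funext fun n => ?_)⟩
  simpa only [res_toCantor, res_length] using branch_eq_of_mem_scheme B (mem_iInter.1 hx n)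

end Brouwer

open Brouwer in
theorem nonempty_homeomorph_cantor (X : Type*) [TopologicalSpace X] [CompactSpace X] [T2Space X]
    [TotallyDisconnectedSpace X] [SecondCountableTopology X] [PerfectSpace X] [Nonempty X] :
    Nonempty (X ≃ₜ (ℕ → Bool)) := by
  obtain ⟨B, hB, hsep⟩ := exists_seq_isClopen_separating (X := X)
  exact ⟨(continuous_toCantor B).homeoOfEquivCompactToT2
    (f := Equiv.ofBijective _ ⟨toCantor_injective B hB hsep, toCantor_surjective B⟩)⟩

section ChainConnected

variable {X : Type*} [MetricSpace X]

def ChainConnected (δ : ℝ) : X → X → Prop :=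
  Relation.ReflTransGen fun a b => dist a b ≤ δ

lemma isClopen_setOf_chainConnected {δ : ℝ} (hδ : 0 < δ) (x : X) :
    IsClopen {y | ChainConnected δ x y} := by
  refine ⟨isOpen_compl_iff.1 (isOpen_iff.2 fun y hy => ⟨δ, hδ, fun z hz hxz => hy ?_⟩),
    isOpen_iff.2 fun y hy => ⟨δ, hδ, fun z hz => hy.tail (mem_ball'.1 hz).le⟩⟩
  exact hxz.tail (mem_ball.1 hz).le

lemma totallyDisconnectedSpace_of_chainConnected
    (h : ∀ ε > 0, ∃ δ > 0, ∀ x y : X, ChainConnected δ x y → dist x y < ε) :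
    TotallyDisconnectedSpace X := by
  refine totallyDisconnectedSpace_iff_connectedComponent_singleton.2 fun x =>
    eq_singleton_iff_unique_mem.2 ⟨mem_connectedComponent, fun y hy => ?_⟩
  refine eq_of_forall_dist_le fun ε hε => ?_
  obtain ⟨δ, hδ, hchain⟩ := h ε hε
  have hxy := (isClopen_setOf_chainConnected hδ x).connectedComponent_subset .refl hy
  exact (dist_comm y x ▸ hchain x y hxy).le

lemma exists_chainConnected_eq_of_finite [Finite X] :
    ∃ δ > 0, ∀ x y : X, ChainConnected δ x y → x = y := by
  have : ∀ᶠ δ in nhdsWithin (0 : ℝ) (Ioi 0), ∀ x y : X, dist x y ≤ δ → x = y := by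
    simp only [Filter.eventually_all]
    intro x y
    obtain rfl | hxy := eq_or_ne x y
    · exact .of_forall fun _ _ => rfl
    · filter_upwards [Ioo_mem_nhdsGT (dist_pos.2 hxy)] with δ hδ hle
      exact absurd hle (not_le.2 hδ.2)
  obtain ⟨δ, hδ, hpos⟩ := (this.and self_mem_nhdsWithin).exists
  refine ⟨δ, hpos, fun x y hxy => ?_⟩
  induction hxy with
  | refl => rfl
  | tail _ hstep ih => exact ih.trans (hδ _ _ hstep)

lemma perfectSpace_of_forall_exists_ne_dist_lt
    (h : ∀ x : X, ∀ ε > 0, ∃ y ≠ x, dist y x < ε) : PerfectSpace X :=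
  perfectSpace_iff_forall_not_isolated.2 fun x => nhdsWithin_basis_ball.neBot_iff.2 fun hε =>
    let ⟨y, hyx, hy⟩ := h x _ hε
    ⟨y, mem_ball.2 hy, hyx⟩

end ChainConnected

section GromovHausdorff

lemma dist_toGHSpace_le_of_isometry {X Y : Type*} [MetricSpace X] [CompactSpace X] [Nonempty X]
    [MetricSpace Y] [CompactSpace Y] [Nonempty Y] {Φ : X → Y} (hΦ : Isometry Φ) {r : ℝ}
    (hr : 0 ≤ r) (h : ∀ y, ∃ x, dist (Φ x) y ≤ r) : dist (toGHSpace X) (toGHSpace Y) ≤ r := by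
  refine (ghDist_le_hausdorffDist hΦ isometry_id).trans (hausdorffDist_le_of_mem_dist hr ?_ ?_)
  · rintro _ ⟨x, rfl⟩
    exact ⟨Φ x, mem_range_self _, by rwa [dist_self]⟩
  · rintro y -
    obtain ⟨x, hx⟩ := h y
    exact ⟨Φ x, mem_range_self x, dist_comm y (Φ x) ▸ hx⟩

lemma nonempty_isometryEquiv_rep (Y : Type*) [MetricSpace Y] [CompactSpace Y] [Nonempty Y] :
    Nonempty (Y ≃ᵢ (toGHSpace Y).Rep) :=
  toGHSpace_eq_toGHSpace_iff_isometryEquiv.1 (GHSpace.toGHSpace_rep _).symm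

lemma exists_finite_rep_dist_lt (p : GHSpace) {r : ℝ} (hr : 0 < r) :
    ∃ q : GHSpace, Finite q.Rep ∧ dist p q < r := by
  obtain ⟨t, -, htfin, hcov⟩ := finite_cover_balls_of_compact (isCompact_univ (X := p.Rep))
    (half_pos hr)
  have hnear : ∀ x : p.Rep, ∃ y : t, dist (y : p.Rep) x ≤ r / 2 := fun x => by
    obtain ⟨y, hy, hxy⟩ := mem_iUnion₂.1 (hcov (mem_univ x))
    exact ⟨⟨y, hy⟩, (mem_ball'.1 hxy).le⟩
  have : Finite t := htfin.to_subtype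
  have : Nonempty t := (hnear (Classical.arbitrary _)).nonempty
  obtain ⟨e⟩ := nonempty_isometryEquiv_rep t
  refine ⟨toGHSpace t, .of_equiv _ e.toEquiv, ?_⟩
  have := dist_toGHSpace_le_of_isometry isometry_subtype_coe (half_pos hr).le hnear
  rw [dist_comm, GHSpace.toGHSpace_rep] at this
  linarith

lemma exists_correspondence_of_dist_lt {p q : GHSpace} {r : ℝ} (h : dist p q < r) :
    ∃ R : p.Rep → q.Rep → Prop, (∀ x, ∃ y, R x y) ∧ (∀ y, ∃ x, R x y) ∧
      ∀ x x' y y', R x y → R x' y' → |dist x x' - dist y y'| < 2 * r := by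
  obtain ⟨Φ, Ψ, hΦ, hΨ, hd⟩ := ghDist_eq_hausdorffDist p.Rep q.Rep
  rw [← dist_ghDist] at hd
  have hlt : hausdorffDist (range Φ) (range Ψ) < r := hd ▸ h
  have hfin : hausdorffEDist (range Φ) (range Ψ) ≠ ⊤ :=
    hausdorffEDist_ne_top_of_nonempty_of_bounded (range_nonempty _) (range_nonempty _)
      (isCompact_range hΦ.continuous).isBounded (isCompact_range hΨ.continuous).isBounded
  refine ⟨fun x y => dist (Φ x) (Ψ y) < r, fun x => ?_, fun y => ?_,
    fun x x' y y' hxy hxy' => ?_⟩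
  · obtain ⟨_, ⟨y, rfl⟩, hy⟩ := exists_dist_lt_of_hausdorffDist_lt (mem_range_self x) hlt hfin
    exact ⟨y, hy⟩
  · obtain ⟨_, ⟨x, rfl⟩, hx⟩ := exists_dist_lt_of_hausdorffDist_lt' (mem_range_self y) hlt hfin
    exact ⟨x, hx⟩
  · rw [← hΦ.dist_eq, ← hΨ.dist_eq, ← Real.dist_eq]
    linarith [dist_dist_dist_le (Φ x) (Φ x') (Ψ y) (Ψ y'), dist_comm (Φ x') (Ψ y')]

def smallChainComponents (ε : ℝ) : Set GHSpace :=
  {p | ∃ δ > 0, ∃ c < ε, ∀ x y : p.Rep, ChainConnected δ x y → dist x y ≤ c}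

def closeCompanions (ε : ℝ) : Set GHSpace :=
  {p | ∃ a > 0, ∃ b < ε, ∀ x : p.Rep, ∃ y, a < dist x y ∧ dist x y < b}

lemma isOpen_smallChainComponents (ε : ℝ) : IsOpen (smallChainComponents ε) := by
  refine isOpen_iff.2 fun p ⟨δ, hδ, c, hc, hchain⟩ => ?_
  set r := min (δ / 4) ((ε - c) / 4)
  have hrδ : r ≤ δ / 4 := min_le_left _ _
  have hrc : r ≤ (ε - c) / 4 := min_le_right _ _
  refine ⟨r, lt_min (by linarith) (by linarith), fun q hq => ?_⟩
  obtain ⟨R, -, hR, hdist⟩ := exists_correspondence_of_dist_lt (mem_ball'.1 hq)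
  choose G hG using hR
  have hGdist (y y' : q.Rep) := abs_lt.1 (hdist _ _ _ _ (hG y) (hG y'))
  refine ⟨δ / 2, by linarith, c + 2 * r, by linarith, fun y y' hyy' => ?_⟩
  have hGchain : ChainConnected δ (G y) (G y') :=
    Relation.ReflTransGen.lift G (fun a b hab => by linarith [hGdist a b]) y y' hyy'
  linarith [hchain _ _ hGchain, hGdist y y']

lemma isOpen_closeCompanions (ε : ℝ) : IsOpen (closeCompanions ε) := by
  refine isOpen_iff.2 fun p ⟨a, ha, b, hb, hcomp⟩ => ?_
  set r := min (a / 4) ((ε - b) / 4)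
  have hra : r ≤ a / 4 := min_le_left _ _
  have hrb : r ≤ (ε - b) / 4 := min_le_right _ _
  refine ⟨r, lt_min (by linarith) (by linarith), fun q hq => ?_⟩
  obtain ⟨R, hR, hR', hdist⟩ := exists_correspondence_of_dist_lt (mem_ball'.1 hq)
  refine ⟨a - 2 * r, by linarith, b + 2 * r, by linarith, fun y => ?_⟩
  obtain ⟨x, hxy⟩ := hR' y
  obtain ⟨x', hax', hx'b⟩ := hcomp x
  obtain ⟨y', hxy'⟩ := hR x'
  have := abs_lt.1 (hdist _ _ _ _ hxy hxy')
  exact ⟨y', by linarith, by linarith⟩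

lemma dense_smallChainComponents {ε : ℝ} (hε : 0 < ε) : Dense (smallChainComponents ε) := by
  refine dense_iff.2 fun p r hr => ?_
  obtain ⟨q, hfin, hpq⟩ := exists_finite_rep_dist_lt p hr
  obtain ⟨δ, hδ, hchain⟩ := exists_chainConnected_eq_of_finite (X := q.Rep)
  exact ⟨q, mem_ball'.2 hpq, δ, hδ, 0, hε, fun x y hxy => by rw [hchain x y hxy, dist_self]⟩

lemma exists_dist_eq_of_prod_pair (X : Type*) [MetricSpace X] {w : ℝ} (hw : 0 ≤ w)
    (y : X × ({0, w} : Set ℝ)) : ∃ y', dist y y' = w := by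
  obtain ⟨x, c, hc⟩ := y
  have hc' : w - c ∈ ({0, w} : Set ℝ) := by
    rcases hc with rfl | rfl <;> simp
  refine ⟨(x, ⟨w - c, hc'⟩), ?_⟩
  rw [Prod.dist_eq, Subtype.dist_eq, dist_self, Real.dist_eq]
  rcases hc with rfl | rfl <;> simp [abs_of_nonneg hw, hw]

lemma dense_closeCompanions {ε : ℝ} (hε : 0 < ε) : Dense (closeCompanions ε) := by
  refine dense_iff.2 fun p r hr => ?_
  set w := min (r / 2) (ε / 2)
  have hwr : w ≤ r / 2 := min_le_left _ _
  have hwε : w ≤ ε / 2 := min_le_right _ _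
  have hw : 0 < w := lt_min (half_pos hr) (half_pos hε)
  let Y := p.Rep × ({0, w} : Set ℝ)
  have : Nonempty Y := ⟨(Classical.arbitrary _, ⟨0, by simp⟩)⟩
  have hΦ : Isometry fun x : p.Rep => ((x, ⟨0, by simp⟩) : Y) :=
    Isometry.of_dist_eq fun x x' => by simp [Prod.dist_eq]
  have hdist := dist_toGHSpace_le_of_isometry hΦ hw.le fun y => ⟨y.1, ?_⟩
  · obtain ⟨e⟩ := nonempty_isometryEquiv_rep Y
    rw [GHSpace.toGHSpace_rep] at hdist
    refine ⟨toGHSpace Y, mem_ball'.2 (by linarith), w / 2, half_pos hw, (w + ε) / 2,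
      by linarith, fun z => ?_⟩
    obtain ⟨y', hy'⟩ := exists_dist_eq_of_prod_pair p.Rep hw.le (e.symm z)
    refine ⟨e y', ?_⟩
    rw [← e.apply_symm_apply z, e.dist_eq, hy']
    constructor <;> linarith
  · obtain ⟨x, c, hc⟩ := y
    rw [Prod.dist_eq, Subtype.dist_eq, dist_self, Real.dist_eq]
    rcases hc with rfl | rfl <;> simp [abs_of_nonneg hw.le, hw.le]

end GromovHausdorff

lemma totallyDisconnectedSpace_rep {p : GHSpace}
    (hp : ∀ n : ℕ, p ∈ smallChainComponents (1 / (n + 1))) : TotallyDisconnectedSpace p.Rep := by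
  refine totallyDisconnectedSpace_of_chainConnected fun ε hε => ?_
  obtain ⟨n, hn⟩ := exists_nat_one_div_lt hε
  obtain ⟨δ, hδ, c, hc, hchain⟩ := hp n
  exact ⟨δ, hδ, fun x y hxy => (hchain x y hxy).trans_lt (hc.trans hn)⟩

lemma perfectSpace_rep {p : GHSpace} (hp : ∀ n : ℕ, p ∈ closeCompanions (1 / (n + 1))) :
    PerfectSpace p.Rep := by
  refine perfectSpace_of_forall_exists_ne_dist_lt fun x ε hε => ?_
  obtain ⟨n, hn⟩ := exists_nat_one_div_lt hε
  obtain ⟨a, ha, b, hb, hcomp⟩ := hp n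
  obtain ⟨y, hay, hyb⟩ := hcomp x
  exact ⟨y, fun hyx => by simp [hyx] at hay; linarith, by rw [dist_comm]; linarith⟩

/-- A generic compact metric space is homeomorphic to the Cantor set (here represented by
the Cantor space `ℕ → Bool`). -/
theorem residual_homeomorphic_cantor :
    {p : GHSpace | Nonempty (p.Rep ≃ₜ (ℕ → Bool))} ∈ residual GHSpace := by
  have hgeneric : (⋂ n : ℕ, smallChainComponents (1 / (n + 1)) ∩
      closeCompanions (1 / (n + 1))) ∈ residual GHSpace :=
    countable_iInter_mem.2 fun n => Filter.inter_mem
      (residual_of_dense_open (isOpen_smallChainComponents _)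
        (dense_smallChainComponents Nat.one_div_pos_of_nat))
      (residual_of_dense_open (isOpen_closeCompanions _)
        (dense_closeCompanions Nat.one_div_pos_of_nat))
  refine Filter.mem_of_superset hgeneric fun p hp => ?_
  simp only [mem_iInter, mem_inter_iff] at hp
  have := totallyDisconnectedSpace_rep fun n => (hp n).1
  have := perfectSpace_rep fun n => (hp n).2
  exact nonempty_homeomorph_cantor p.Rep
end
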